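/- Let (P,≻,q) be a problem and k > 1. If the constrained First-Preference-First mechanism FPF^k is stable at (P,≻,q) (i.e., FPF^k(P,≻,q) is stable at (P,≻,q)), then the constrained Gale-Shapley mechanism GS^k is not manipulable at (P,≻,q). -/

import Mathlib

/-!
School choice framework following Bonkoungou–Nesterov,
"Reforms meet fairness concerns in school and college admissions".

Students `I` and schools `S` are finite types with `|I| > |S|`.
A strict preference relation of a student over `S ∪ {∅}` is represented by a list
of `Option S` containing every element exactly once (earlier = more preferred);
`none` is the outside option.  A strict priority order of a school is a list of
`I` containing every student exactly once (earlier = higher priority).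
-/

namespace SchoolChoice

variable {I S : Type*} [Fintype I] [DecidableEq I] [Fintype S] [DecidableEq S]

/-- `p` is a strict preference relation on `S ∪ {∅}`: a ranking list containing every
element of `Option S` exactly once. -/
def ValidPref (p : List (Option S)) : Prop := p.Nodup ∧ ∀ x : Option S, x ∈ p

/-- `pr` is a strict priority order: a ranking list containing every student exactly once. -/
def ValidPrio (pr : List I) : Prop := pr.Nodup ∧ ∀ i : I, i ∈ pr

/-- `a` is strictly preferred to `b` under the preference relation `p`. -/
def prefLt (p : List (Option S)) (a b : Option S) : Prop := p.idxOf a < p.idxOf b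

/-- `i` has strictly higher priority than `j` under the priority order `pr`. -/
def prioLt (pr : List I) (i j : I) : Prop := pr.idxOf i < pr.idxOf j

instance (p : List (Option S)) (a b : Option S) : Decidable (prefLt p a b) :=
  inferInstanceAs (Decidable (_ < _))

instance (pr : List I) (i j : I) : Decidable (prioLt pr i j) :=
  inferInstanceAs (Decidable (_ < _))

/-- The acceptable schools of `p` (those preferred to the outside option), in preference
order. -/
def acceptables (p : List (Option S)) : List S := (p.takeWhile Option.isSome).filterMap id

/-- The truncation of `p` after its `k`-th acceptable school: the preference relation
listing, in the same order, only the `min k _` most-preferred acceptable schools of `p`,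
all other schools being unacceptable (kept below `none` in their original order). -/
def truncate (p : List (Option S)) (k : ℕ) : List (Option S) :=
  ((acceptables p).take k).map some ++
    none :: p.filter (fun x => decide (x ≠ none ∧ x ∉ ((acceptables p).take k).map some))

/-- `μ` is a matching: it respects the capacities `q`. -/
def IsMatching (q : S → ℕ) (μ : I → Option S) : Prop :=
  ∀ s : S, (Finset.univ.filter (fun i => μ i = some s)).card ≤ q s

/-- The pair `(i, s)` blocks `μ` under the problem `(P, prio, q)`. -/
def Blocks (P : I → List (Option S)) (prio : S → List I) (q : S → ℕ)
    (μ : I → Option S) (i : I) (s : S) : Prop :=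
  prefLt (P i) (some s) (μ i) ∧
    ((Finset.univ.filter (fun j => μ j = some s)).card < q s ∨
      ∃ j : I, μ j = some s ∧ prioLt (prio s) i j)

/-- `i` is a blocking student for `μ` under `(P, prio, q)`. -/
def BlockingStudent (P : I → List (Option S)) (prio : S → List I) (q : S → ℕ)
    (μ : I → Option S) (i : I) : Prop :=
  ∃ s : S, Blocks P prio q μ i s

/-- `μ` is individually rational under `P`. -/
def IndividuallyRational (P : I → List (Option S)) (μ : I → Option S) : Prop :=
  ∀ i : I, ¬ prefLt (P i) none (μ i)

/-- `μ` is stable at `(P, prio, q)`. -/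
def IsStable (P : I → List (Option S)) (prio : S → List I) (q : S → ℕ)
    (μ : I → Option S) : Prop :=
  IndividuallyRational P μ ∧ ∀ i : I, ¬ BlockingStudent P prio q μ i

/-- The number of blocking students for `μ` under `(P, prio, q)`. -/
noncomputable def numBlocking (P : I → List (Option S)) (prio : S → List I) (q : S → ℕ)
    (μ : I → Option S) : ℕ :=
  {i : I | BlockingStudent P prio q μ i}.ncard

/-! ### The Gale–Shapley student-proposing deferred acceptance mechanism

The state `σ : I → ℕ` records, for each student, how many of her acceptable schools
have already rejected her; she currently applies to the `σ i`-th school on her list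
(if any).  At each round every school tentatively keeps the `q s` highest-priority
students among its current applicants and rejects the rest, who move on. -/

/-- The school student `i` currently applies to. -/
def daTarget (P : I → List (Option S)) (σ : I → ℕ) (i : I) : Option S :=
  (acceptables (P i))[σ i]?

/-- The students tentatively held by school `s`: the `q s` highest-priority current
applicants. -/
def daHeld (P : I → List (Option S)) (prio : S → List I) (q : S → ℕ)
    (σ : I → ℕ) (s : S) : List I :=
  ((prio s).filter (fun i => decide (daTarget P σ i = some s))).take (q s)

/-- One round of deferred acceptance: every rejected student moves to her next choice. -/
def daStep (P : I → List (Option S)) (prio : S → List I) (q : S → ℕ)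
    (σ : I → ℕ) : I → ℕ := fun i =>
  match daTarget P σ i with
  | none => σ i
  | some s => if i ∈ daHeld P prio q σ s then σ i else σ i + 1

/-- The Gale–Shapley (student-proposing deferred acceptance) mechanism.  Iterating the
round map `|I| * |S| + 1` times is guaranteed to reach the terminal state. -/
def GS (P : I → List (Option S)) (prio : S → List I) (q : S → ℕ) : I → Option S :=
  fun i =>
    let σ := (daStep P prio q)^[Fintype.card I * Fintype.card S + 1] (fun _ => 0)
    match daTarget P σ i with
    | none => none
    | some s => if i ∈ daHeld P prio q σ s then some s else none

/-- The constrained Gale–Shapley mechanism `GS^k`. -/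
def GSk (k : ℕ) (P : I → List (Option S)) (prio : S → List I) (q : S → ℕ) : I → Option S :=
  GS (fun i => truncate (P i) k) prio q

/-! ### The Boston (immediate acceptance) mechanism -/

/-- Round `t` of the Boston mechanism: each not-yet-accepted student applies to her
`t`-th ranked acceptable school (0-indexed), and each school permanently accepts, up to
its remaining capacity, its highest-priority new applicants. -/
def bostonRound (P : I → List (Option S)) (prio : S → List I) (q : S → ℕ)
    (μ : I → Option S) (t : ℕ) : I → Option S := fun i =>
  match μ i with
  | some s => some s
  | none =>
    match (acceptables (P i))[t]? with
    | none => none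
    | some s =>
      if i ∈ ((prio s).filter
            (fun j => decide (μ j = none ∧ (acceptables (P j))[t]? = some s))).take
          (q s - (Finset.univ.filter (fun j => μ j = some s)).card)
      then some s else none

/-- The Boston (immediate acceptance) mechanism. -/
def Boston (P : I → List (Option S)) (prio : S → List I) (q : S → ℕ) : I → Option S :=
  (List.range (Fintype.card S)).foldl (bostonRound P prio q) (fun _ => none)

/-- The constrained Boston mechanism `β^k`. -/
def Bostonk (k : ℕ) (P : I → List (Option S)) (prio : S → List I) (q : S → ℕ) :
    I → Option S :=
  Boston (fun i => truncate (P i) k) prio q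

/-! ### The first-preference-first mechanism -/

/-- The adjusted priority profile: each first-preference-first school (member of `fpf`)
ranks students first by the rank they assign to it under `P` (counting the ranking of the
outside option as well), ties broken by the original priority; equal-preference schools
keep their original priority. -/
def fpfPrio (fpf : Finset S) (P : I → List (Option S)) (prio : S → List I) : S → List I :=
  fun s =>
    if s ∈ fpf then
      (List.range (Fintype.card S + 1)).flatMap
        (fun r => (prio s).filter (fun i => decide ((P i).idxOf (some s) = r)))
    else prio s

/-- The first-preference-first mechanism with set `fpf` of first-preference-first
schools: Gale–Shapley run on the adjusted priorities. -/
def FPF (fpf : Finset S) (P : I → List (Option S)) (prio : S → List I) (q : S → ℕ) :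
    I → Option S :=
  GS P (fpfPrio fpf P prio) q

/-- The constrained first-preference-first mechanism `FPF^k`. -/
def FPFk (fpf : Finset S) (k : ℕ) (P : I → List (Option S)) (prio : S → List I)
    (q : S → ℕ) : I → Option S :=
  FPF fpf (fun i => truncate (P i) k) prio q

/-! ### Manipulation and equilibrium notions -/

/-- Student `i` is a manipulating student of the mechanism `φ` (with priorities and
capacities fixed) at the true profile `P`. -/
def ManipulatingStudent (φ : (I → List (Option S)) → I → Option S)
    (P : I → List (Option S)) (i : I) : Prop :=
  ∃ Q : List (Option S), ValidPref Q ∧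
    prefLt (P i) (φ (Function.update P i Q) i) (φ P i)

/-- The mechanism `φ` is not manipulable at `P`. -/
def NotManipulable (φ : (I → List (Option S)) → I → Option S)
    (P : I → List (Option S)) : Prop :=
  ∀ i : I, ¬ ManipulatingStudent φ P i

/-- `P'` is a Nash equilibrium of the game `(φ, P)` in which the sophisticated students
are the members of `M` (who may misreport, and best respond) and all other (sincere)
students report truthfully. -/
def NashEq (φ : (I → List (Option S)) → I → Option S) (P : I → List (Option S))
    (M : Finset I) (P' : I → List (Option S)) : Prop :=
  (∀ i, ValidPref (P' i)) ∧ (∀ i ∉ M, P' i = P i) ∧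
    ∀ i ∈ M, ∀ Q : List (Option S), ValidPref Q →
      ¬ prefLt (P i) (φ (Function.update P' i Q) i) (φ P' i)

/-! ### Semi-sophisticated students -/

/-- Student `i` is guaranteed her first choice `s`: `s` is her most-preferred acceptable
school and `i` is among the `q s` highest-priority students at `s`. -/
def GuaranteedFirstChoice (P : I → List (Option S)) (prio : S → List I) (q : S → ℕ)
    (i : I) (s : S) : Prop :=
  (acceptables (P i)).head? = some s ∧ (prio s).idxOf i < q s

instance (P : I → List (Option S)) (prio : S → List I) (q : S → ℕ) (i : I) (s : S) :
    Decidable (GuaranteedFirstChoice P prio q i s) :=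
  inferInstanceAs (Decidable (_ ∧ _))

/-- School `s` is competitive: at least `q s` students are guaranteed their first
choice `s`. -/
def Competitive (P : I → List (Option S)) (prio : S → List I) (q : S → ℕ) (s : S) : Prop :=
  q s ≤ (Finset.univ.filter (fun i => GuaranteedFirstChoice P prio q i s)).card

instance (P : I → List (Option S)) (prio : S → List I) (q : S → ℕ) (s : S) :
    Decidable (Competitive P prio q s) :=
  inferInstanceAs (Decidable (_ ≤ _))

/-- `P'` is a Nash equilibrium of the game `(GS^ℓ, P)` with semi-sophisticated students:
every student guaranteed her first choice reports truthfully; every other student reports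
truthfully if she has at most `ℓ` acceptable schools or all her acceptable schools are
competitive, and otherwise lists as acceptable, in the order given by her true preference,
only her acceptable schools that are not competitive. -/
def SemiSophProfile (ℓ : ℕ) (P : I → List (Option S)) (prio : S → List I) (q : S → ℕ)
    (P' : I → List (Option S)) : Prop :=
  ∀ i : I,
    ((∃ s : S, GuaranteedFirstChoice P prio q i s) → P' i = P i) ∧
    (¬ (∃ s : S, GuaranteedFirstChoice P prio q i s) →
      (((acceptables (P i)).length ≤ ℓ ∨ ∀ s ∈ acceptables (P i), Competitive P prio q s) →
          P' i = P i) ∧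
      (¬ ((acceptables (P i)).length ≤ ℓ ∨
            ∀ s ∈ acceptables (P i), Competitive P prio q s) →
          acceptables (P' i) =
            (acceptables (P i)).filter (fun s => decide (¬ Competitive P prio q s))))

/-!
Let `μ` be the outcome of `GS^k` and `ν` its outcome after student `i` misreports, and
suppose `i` prefers `ν i` to `μ i`. If `μ i` is a school, it is among her top `k` choices,
hence so is `ν i`: then `i` manipulates the Gale–Shapley mechanism at the truncated profile,
which the blocking lemma of Gale and Sotomayor rules out. If `i` is unmatched at `μ`, then,
by the rural hospitals theorem, she is also unmatched at the outcome of `FPF^k`, which is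
stable at the truncated profile since it is stable at `(P,≻,q)` and only uses top-`k`
choices. Comparing the two stable matchings once `i` lists `ν i` alone shows that `i` has a
claim to `ν i` at the outcome of `FPF^k`, contradicting its stability.
-/

set_option linter.unusedSectionVars false

theorem _root_.List.idxOf_map_of_injective {α β : Type*} [BEq α] [LawfulBEq α] [BEq β]
    [LawfulBEq β] {f : α → β} (hf : Function.Injective f) (l : List α) (a : α) :
    (l.map f).idxOf (f a) = l.idxOf a := by
  induction l with
  | nil => rfl
  | cons b l ih => by_cases h : b = a <;> simp [h, hf.eq_iff, ih]

theorem _root_.List.Nodup.pairwise_idxOf_lt {α : Type*} [BEq α] [LawfulBEq α] {l : List α}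
    (hl : l.Nodup) : l.Pairwise (fun a b => l.idxOf a < l.idxOf b) := by
  rw [List.pairwise_iff_getElem]
  intro m n hm hn hmn
  rwa [hl.idxOf_getElem m hm, hl.idxOf_getElem n hn]

theorem _root_.List.Pairwise.mem_take_of_rel {α : Type*} {r : α → α → Prop} {l : List α}
    (hl : l.Pairwise r) (hr : ∀ a b, r a b → ¬ r b a) {n : ℕ} {a b : α}
    (hb : b ∈ l.take n) (ha : a ∈ l) (hab : r a b) : a ∈ l.take n := by
  rw [← List.take_append_drop n l, List.pairwise_append] at hl
  rw [← List.take_append_drop n l, List.mem_append] at ha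
  exact ha.resolve_right fun had => hr a b hab (hl.2.2 b hb a had)

theorem _root_.List.Pairwise.rel_of_mem_take_of_notMem {α : Type*} {r : α → α → Prop}
    {l : List α} (hl : l.Pairwise r) {n : ℕ} {a b : α} (ha : a ∈ l.take n) (hb : b ∈ l)
    (hbn : b ∉ l.take n) : r a b := by
  rw [← List.take_append_drop n l, List.pairwise_append] at hl
  rw [← List.take_append_drop n l, List.mem_append] at hb
  exact hl.2.2 a ha b (hb.resolve_left hbn)

theorem _root_.List.Nodup.exists_mem_notMem {α : Type*} {l₁ l₂ : List α} (hl₁ : l₁.Nodup)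
    (hlen : l₂.length ≤ l₁.length) {a : α} (ha₂ : a ∈ l₂) (ha₁ : a ∉ l₁) :
    ∃ x ∈ l₁, x ∉ l₂ := by
  by_contra! hsub
  have := ((List.nodup_cons.mpr ⟨ha₁, hl₁⟩).subperm
    (List.cons_subset.mpr ⟨ha₂, hsub⟩)).length_le
  rw [List.length_cons] at this
  omega

/-- Double counting: `B` lies in the union of what the classes `ν j`, `j ∈ B`, gain from `μ`
to `ν`, which is at most what they lose, and all they lose lies in `B`. -/
theorem _root_.Finset.exists_eq_of_card_fiber_le {α γ : Type*} [Fintype α] [DecidableEq α]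
    [DecidableEq γ] {μ ν : α → γ} {B : Finset α} (hne : ∀ j ∈ B, μ j ≠ ν j)
    (hcard : ∀ j ∈ B, (Finset.univ.filter fun h => ν h = ν j).card ≤
      (Finset.univ.filter fun h => μ h = ν j).card)
    (hclosed : ∀ j ∈ B, ∀ h, μ h = ν j → ν h ≠ ν j → h ∈ B) :
    ∀ j ∈ B, ∃ j' ∈ B, μ j = ν j' := by
  set T := B.image ν
  let gained (t : γ) := (Finset.univ.filter fun h => ν h = t).filter fun h => ¬ μ h = t
  let lost (t : γ) := (Finset.univ.filter fun h => μ h = t).filter fun h => ¬ ν h = t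
  have hboth (t : γ) : (Finset.univ.filter fun h => ν h = t).filter (fun h => μ h = t) =
      (Finset.univ.filter fun h => μ h = t).filter (fun h => ν h = t) := by
    ext h; simp [and_comm]
  have hgained : ∀ t ∈ T, (gained t).card ≤ (lost t).card := by
    intro t ht
    obtain ⟨j, hj, rfl⟩ := Finset.mem_image.mp ht
    have h1 := Finset.card_filter_add_card_filter_not (s := Finset.univ.filter fun h => ν h = ν j)
      (fun h => μ h = ν j)
    have h2 := Finset.card_filter_add_card_filter_not (s := Finset.univ.filter fun h => μ h = ν j)
      (fun h => ν h = ν j)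
    rw [hboth] at h1
    have := hcard j hj
    simp only [gained, lost]
    omega
  have hBgained : B ⊆ T.biUnion gained := fun j hj =>
    Finset.mem_biUnion.mpr ⟨ν j, Finset.mem_image_of_mem ν hj, by simp [gained, hne j hj]⟩
  have hlostB : T.biUnion lost ⊆ B := by
    intro h hh
    obtain ⟨t, ht, hh⟩ := Finset.mem_biUnion.mp hh
    obtain ⟨j, hj, rfl⟩ := Finset.mem_image.mp ht
    simp only [lost, Finset.mem_filter, Finset.mem_univ, true_and] at hh
    exact hclosed j hj h hh.1 hh.2
  have hdisj : (T : Set γ).PairwiseDisjoint lost := fun t _ t' _ htt' =>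
    Finset.disjoint_left.mpr fun h ht ht' => by
      simp only [lost, Finset.mem_filter, Finset.mem_univ, true_and] at ht ht'
      exact htt' (ht.1.symm.trans ht'.1)
  have hcardB : (T.biUnion lost).card = B.card := by
    refine le_antisymm (Finset.card_le_card hlostB) ?_
    calc B.card ≤ (T.biUnion gained).card := Finset.card_le_card hBgained
      _ ≤ ∑ t ∈ T, (gained t).card := Finset.card_biUnion_le
      _ ≤ ∑ t ∈ T, (lost t).card := Finset.sum_le_sum hgained
      _ = (T.biUnion lost).card := (Finset.card_biUnion hdisj).symm
  intro j hj
  rw [← Finset.eq_of_subset_of_card_le hlostB hcardB.ge] at hj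
  obtain ⟨t, ht, hjt⟩ := Finset.mem_biUnion.mp hj
  obtain ⟨j', hj', rfl⟩ := Finset.mem_image.mp ht
  exact ⟨j', hj', (Finset.mem_filter.mp (Finset.mem_filter.mp hjt).1).2⟩

theorem _root_.Finset.card_filter_eq_none_add_sum {α β : Type*} [Fintype α] [Fintype β] [DecidableEq β]
    (f : α → Option β) :
    (Finset.univ.filter fun a => f a = none).card +
      ∑ t, (Finset.univ.filter fun a => f a = some t).card = Fintype.card α := by
  rw [← Fintype.sum_option (fun o => (Finset.univ.filter fun a => f a = o).card),
    ← Finset.card_univ]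
  exact (Finset.card_eq_sum_card_fiberwise fun _ _ => Finset.mem_coe.mpr (Finset.mem_univ _)).symm

theorem prioLt_pairwise {pr : List I} (hpr : pr.Nodup) : pr.Pairwise (prioLt pr) :=
  hpr.pairwise_idxOf_lt

def prefList (B : List S) (rest : List (Option S)) : List (Option S) :=
  B.map some ++ none :: rest

section PrefList

variable (B : List S) (rest : List (Option S))

theorem acceptables_prefList : acceptables (prefList B rest) = B := by
  simp [acceptables, prefList, List.filterMap_map]

theorem idxOf_prefList_some {s : S} (h : s ∈ B) :
    (prefList B rest).idxOf (some s) = B.idxOf s := by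
  rw [prefList, List.idxOf_append_of_mem (by simpa using h),
    List.idxOf_map_of_injective (Option.some_injective S)]

theorem idxOf_prefList_none : (prefList B rest).idxOf none = B.length := by
  rw [prefList, List.idxOf_append_of_notMem (by simp)]
  simp

theorem length_lt_idxOf_prefList_some {s : S} (h : s ∉ B) :
    B.length < (prefList B rest).idxOf (some s) := by
  rw [prefList, List.idxOf_append_of_notMem (by simpa using h)]
  simp

theorem validPref_prefList (hB : B.Nodup) (hrest : rest.Nodup) (hnone : none ∉ rest)
    (hdisj : ∀ s ∈ B, some s ∉ rest) (hcover : ∀ s ∉ B, some s ∈ rest) :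
    ValidPref (prefList B rest) := by
  refine ⟨?_, ?_⟩
  · refine List.nodup_append.mpr
      ⟨hB.map (Option.some_injective S), List.nodup_cons.mpr ⟨hnone, hrest⟩, ?_⟩
    simp only [List.mem_map, List.mem_cons]
    rintro _ ⟨s, hs, rfl⟩ b (rfl | hb) hsb
    · exact Option.some_ne_none s hsb
    · exact hdisj s hs (hsb ▸ hb)
  · rintro (_ | s)
    · simp [prefList]
    · by_cases hs : s ∈ B
      · simp [prefList, hs]
      · simp [prefList, hcover s hs]

end PrefList

theorem ValidPref.exists_eq_prefList {p : List (Option S)} (hp : ValidPref p) :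
    ∃ rest, p = prefList (acceptables p) rest := by
  have hsome : ∀ x ∈ p.takeWhile Option.isSome, x.isSome := fun x hx =>
    List.mem_takeWhile_imp hx
  have hmap : (acceptables p).map some = p.takeWhile Option.isSome := by
    rw [acceptables, List.map_filterMap_some_eq_filter_map_isSome, List.map_id,
      List.filter_eq_self]
    exact hsome
  obtain ⟨rest, hrest⟩ : ∃ rest, p.dropWhile Option.isSome = none :: rest := by
    have hnone : none ∈ p.dropWhile Option.isSome := by
      have := hp.2 none
      rw [← List.takeWhile_append_dropWhile (p := Option.isSome) (l := p),
        List.mem_append] at this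
      exact this.resolve_left fun h => by simpa using hsome none h
    have hne := List.ne_nil_of_mem hnone
    refine ⟨(p.dropWhile Option.isSome).tail, ?_⟩
    have hhead := List.head_dropWhile_not Option.isSome hne
    simp only [Option.isSome_eq_false_iff, Option.isNone_iff_eq_none] at hhead
    rw [← hhead]
    exact (List.cons_head_tail hne).symm
  exact ⟨rest, by rw [prefList, hmap, ← hrest, List.takeWhile_append_dropWhile]⟩

section Preferences

variable {p : List (Option S)}

theorem acceptables_nodup (hp : ValidPref p) : (acceptables p).Nodup := by
  obtain ⟨rest, hrest⟩ := hp.exists_eq_prefList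
  have := hp.1
  rw [hrest, prefList] at this
  exact (List.nodup_append.mp this).1.of_map some

theorem prefLt_some_getElem?_iff (hp : ValidPref p) {s : S} {n : ℕ} :
    prefLt p (some s) (acceptables p)[n]? ↔
      s ∈ acceptables p ∧ (acceptables p).idxOf s < n := by
  obtain ⟨rest, hrest⟩ := hp.exists_eq_prefList
  set A := acceptables p
  have hidx : p.idxOf A[n]? = min n A.length := by
    rw [hrest]
    by_cases hn : n < A.length
    · rw [List.getElem?_eq_getElem hn, idxOf_prefList_some _ _ (List.getElem_mem hn),
        (acceptables_nodup hp).idxOf_getElem]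
      omega
    · rw [List.getElem?_eq_none (by omega), idxOf_prefList_none]
      omega
  rw [prefLt, hidx]
  by_cases hs : s ∈ A
  · rw [hrest, idxOf_prefList_some _ _ hs]
    have := List.idxOf_lt_length_of_mem hs
    simp only [hs, true_and]
    omega
  · have := length_lt_idxOf_prefList_some A rest hs
    rw [← hrest] at this
    simp only [hs, false_and, iff_false, not_lt]
    omega

theorem prefLt_some_none_iff (hp : ValidPref p) {s : S} :
    prefLt p (some s) none ↔ s ∈ acceptables p := by
  have := prefLt_some_getElem?_iff hp (s := s) (n := (acceptables p).length)
  rw [List.getElem?_eq_none le_rfl] at this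
  rw [this, and_iff_left_iff_imp]
  exact List.idxOf_lt_length_of_mem

theorem prefLt_some_some_iff (hp : ValidPref p) {s u : S} (hu : u ∈ acceptables p) :
    prefLt p (some s) (some u) ↔
      s ∈ acceptables p ∧ (acceptables p).idxOf s < (acceptables p).idxOf u := by
  rw [← prefLt_some_getElem?_iff hp, List.getElem?_idxOf hu]

theorem not_prefLt_none_some (hp : ValidPref p) {u : S} (hu : u ∈ acceptables p) :
    ¬ prefLt p none (some u) := by
  have := (prefLt_some_none_iff hp).mpr hu
  unfold prefLt at *
  omega

theorem prefLt_irrefl (p : List (Option S)) (a : Option S) : ¬ prefLt p a a :=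
  lt_irrefl _

theorem prefLt_or_prefLt_of_ne (hp : ValidPref p) {a b : Option S} (hab : a ≠ b) :
    prefLt p a b ∨ prefLt p b a := by
  unfold prefLt
  have : p.idxOf a ≠ p.idxOf b := fun h => hab ((List.idxOf_inj (hp.2 a)).mp h)
  omega

theorem prefLt_of_prefLt_of_not_prefLt {p : List (Option S)} {a b c : Option S}
    (hab : prefLt p a b) (hcb : ¬ prefLt p c b) : prefLt p a c := by
  unfold prefLt at *
  omega

end Preferences

theorem validPref_update {P : I → List (Option S)} (hP : ∀ i, ValidPref (P i)) (i : I)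
    {Q : List (Option S)} (hQ : ValidPref Q) (j : I) : ValidPref (Function.update P i Q j) := by
  rcases eq_or_ne j i with rfl | h
  · rwa [Function.update_self]
  · rw [Function.update_of_ne h]; exact hP j

section Truncation

variable {p : List (Option S)} (k : ℕ)

theorem acceptables_truncate : acceptables (truncate p k) = (acceptables p).take k :=
  acceptables_prefList _ _

theorem validPref_truncate (hp : ValidPref p) : ValidPref (truncate p k) := by
  refine validPref_prefList _ _ ((acceptables_nodup hp).sublist (List.take_sublist _ _))
    (hp.1.sublist List.filter_sublist) (by simp) (fun s hs h => ?_) (fun s hs => ?_)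
  · simpa [← List.map_take, hs] using List.of_mem_filter h
  · exact List.mem_filter.mpr ⟨hp.2 _, by simpa [← List.map_take] using hs⟩

theorem prefLt_truncate_of_prefLt (hp : ValidPref p) {a : Option S} {u : S}
    (hu : u ∈ (acceptables p).take k) (h : prefLt p a (some u)) :
    prefLt (truncate p k) a (some u) := by
  have huA := List.mem_of_mem_take hu
  obtain ⟨s, rfl⟩ : ∃ s, a = some s := by
    cases a with
    | none => exact absurd h (not_prefLt_none_some hp huA)
    | some s => exact ⟨s, rfl⟩
  obtain ⟨hsA, hsu⟩ := (prefLt_some_some_iff hp huA).mp h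
  have hs : s ∈ (acceptables p).take k := by
    rw [List.mem_take_iff_idxOf_lt hsA]
    exact hsu.trans ((List.mem_take_iff_idxOf_lt huA).mp hu)
  rw [prefLt_some_some_iff (validPref_truncate k hp) (by rwa [acceptables_truncate]),
    acceptables_truncate, (List.take_prefix k _).idxOf_eq_of_mem hs,
    (List.take_prefix k _).idxOf_eq_of_mem hu]
  exact ⟨hs, hsu⟩

theorem prefLt_of_prefLt_truncate (hp : ValidPref p) {a b : Option S}
    (hb : ∀ u, b = some u → u ∈ (acceptables p).take k) (h : prefLt (truncate p k) a b) :
    prefLt p a b := by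
  have hpk := validPref_truncate k hp
  cases b with
  | none =>
    cases a with
    | none => exact absurd h (prefLt_irrefl _ _)
    | some s =>
      rw [prefLt_some_none_iff hpk, acceptables_truncate] at h
      exact (prefLt_some_none_iff hp).mpr (List.mem_of_mem_take h)
  | some u =>
    have hu := hb u rfl
    cases a with
    | none => exact absurd h (not_prefLt_none_some hpk (by rwa [acceptables_truncate]))
    | some s =>
      rw [prefLt_some_some_iff hpk (by rwa [acceptables_truncate]), acceptables_truncate] at h
      rw [prefLt_some_some_iff hp (List.mem_of_mem_take hu),
        ← (List.take_prefix k _).idxOf_eq_of_mem h.1,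
        ← (List.take_prefix k _).idxOf_eq_of_mem hu]
      exact ⟨List.mem_of_mem_take h.1, h.2⟩

end Truncation

theorem isStable_truncate {P : I → List (Option S)} {prio : S → List I} {q : S → ℕ}
    (hP : ∀ i, ValidPref (P i)) (k : ℕ) {μ : I → Option S}
    (hμ : ∀ j u, μ j = some u → u ∈ (acceptables (P j)).take k)
    (hst : IsStable P prio q μ) : IsStable (fun j => truncate (P j) k) prio q μ := by
  refine ⟨fun j h => ?_, fun j ⟨t, hpref, hcap⟩ => hst.2 j ⟨t, ?_, hcap⟩⟩
  · cases hj : μ j with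
    | none => rw [hj] at h; exact prefLt_irrefl _ _ h
    | some u =>
      rw [hj] at h
      exact not_prefLt_none_some (validPref_truncate k (hP j))
        (by rw [acceptables_truncate]; exact hμ j u hj) h
  · exact prefLt_of_prefLt_truncate k (hP j) (hμ j) hpref

section DeferredAcceptance

variable (P : I → List (Option S)) (prio : S → List I) (q : S → ℕ)

def daState (n : ℕ) : I → ℕ := (daStep P prio q)^[n] (fun _ => 0)

def daRejects (σ : I → ℕ) (t : S) (j : I) : Prop :=
  daTarget P σ j = some t ∧ j ∉ daHeld P prio q σ t

def FullAbove (σ : I → ℕ) (t : S) (j : I) : Prop :=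
  (daHeld P prio q σ t).length = q t ∧ ∀ h ∈ daHeld P prio q σ t, prioLt (prio t) h j

variable {P prio q} {σ : I → ℕ} {t : S} {j : I}

theorem daTarget_eq_some_iff (hPj : ValidPref (P j)) :
    daTarget P σ j = some t ↔
      t ∈ acceptables (P j) ∧ σ j = (acceptables (P j)).idxOf t := by
  rw [daTarget, List.getElem?_eq_some_iff]
  constructor
  · rintro ⟨hlt, rfl⟩
    exact ⟨List.getElem_mem hlt, ((acceptables_nodup hPj).idxOf_getElem _ hlt).symm⟩
  · rintro ⟨ht, hσ⟩
    simp only [hσ]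
    exact ⟨List.idxOf_lt_length_of_mem ht, List.getElem_idxOf _⟩

theorem mem_daHeld (h : j ∈ daHeld P prio q σ t) :
    daTarget P σ j = some t ∧ j ∈ prio t := by
  have := List.mem_of_mem_take h
  simp only [List.mem_filter, decide_eq_true_eq] at this
  exact this.symm

theorem daHeld_nodup (hprio : (prio t).Nodup) : (daHeld P prio q σ t).Nodup :=
  (hprio.filter _).sublist (List.take_sublist _ _)

theorem length_daHeld_le : (daHeld P prio q σ t).length ≤ q t :=
  (List.length_take_le _ _)

theorem daStep_apply_of_mem_daHeld (h : j ∈ daHeld P prio q σ t) :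
    daStep P prio q σ j = σ j := by
  simp [daStep, (mem_daHeld h).1, h]

theorem daTarget_daStep_of_mem_daHeld (h : j ∈ daHeld P prio q σ t) :
    daTarget P (daStep P prio q σ) j = some t := by
  rw [daTarget, daStep_apply_of_mem_daHeld h]
  exact (mem_daHeld h).1

theorem daStep_apply_of_daRejects (h : daRejects P prio q σ t j) :
    daStep P prio q σ j = σ j + 1 := by
  simp [daStep, h.1, h.2]

theorem exists_daRejects_of_daStep_apply_ne (h : daStep P prio q σ j ≠ σ j) :
    ∃ t, daRejects P prio q σ t j := by
  unfold daStep at h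
  split at h
  · exact absurd rfl h
  · next t ht =>
    split_ifs at h with hheld
    exacts [absurd rfl h, ⟨t, ht, hheld⟩]

theorem le_daStep_apply (σ : I → ℕ) (j : I) : σ j ≤ daStep P prio q σ j := by
  by_cases h : daStep P prio q σ j = σ j
  · exact h.ge
  · obtain ⟨t, ht⟩ := exists_daRejects_of_daStep_apply_ne h
    rw [daStep_apply_of_daRejects ht]
    exact Nat.le_succ _

theorem daState_succ (n : ℕ) :
    daState P prio q (n + 1) = daStep P prio q (daState P prio q n) :=
  Function.iterate_succ_apply' _ _ _

theorem daState_succ_apply_le (n : ℕ) (j : I) :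
    daState P prio q (n + 1) j ≤ daState P prio q n j + 1 := by
  rw [daState_succ]
  by_cases h : daStep P prio q (daState P prio q n) j = daState P prio q n j
  · omega
  · obtain ⟨t, ht⟩ := exists_daRejects_of_daStep_apply_ne h
    exact (daStep_apply_of_daRejects ht).le

theorem daState_mono (j : I) : Monotone fun n => daState P prio q n j :=
  monotone_nat_of_le_succ fun n => by rw [daState_succ]; exact le_daStep_apply _ _

theorem daState_le_length (n : ℕ) (j : I) :
    daState P prio q n j ≤ (acceptables (P j)).length := by
  induction n with
  | zero => simp [daState]
  | succ n ih =>
    rw [daState_succ]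
    by_cases h : daStep P prio q (daState P prio q n) j = daState P prio q n j
    · rwa [h]
    · obtain ⟨t, ht⟩ := exists_daRejects_of_daStep_apply_ne h
      rw [daStep_apply_of_daRejects ht]
      exact (List.getElem?_eq_some_iff.mp ht.1).1

/-- Each round moves a student at most one school down her list. -/
theorem exists_daState_eq_of_lt {n v : ℕ} (h : v < daState P prio q n j) :
    ∃ m < n, daState P prio q m j = v ∧ daState P prio q (m + 1) j = v + 1 := by
  induction n with
  | zero => simp [daState] at h
  | succ n ih =>
    by_cases hv : v < daState P prio q n j
    · obtain ⟨m, hm, hmv⟩ := ih hv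
      exact ⟨m, by omega, hmv⟩
    · have := daState_succ_apply_le (P := P) (prio := prio) (q := q) n j
      exact ⟨n, by omega, by omega, by omega⟩

theorem daState_eq_of_fixed {m n : ℕ}
    (hm : daState P prio q (m + 1) = daState P prio q m) (hmn : m ≤ n) :
    daState P prio q n = daState P prio q m := by
  induction n, hmn using Nat.le_induction with
  | base => rfl
  | succ n _ ih => rw [daState_succ, ih, ← daState_succ, hm]

theorem le_sum_daState {m : ℕ}
    (h : ∀ n < m, daState P prio q (n + 1) ≠ daState P prio q n) :
    m ≤ ∑ j, daState P prio q m j := by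
  induction m with
  | zero => exact Nat.zero_le _
  | succ m ih =>
    obtain ⟨j, hj⟩ := Function.ne_iff.mp (h m m.lt_succ_self)
    have hlt : ∑ j, daState P prio q m j < ∑ j, daState P prio q (m + 1) j :=
      Finset.sum_lt_sum (fun j _ => daState_mono j m.le_succ)
        ⟨j, Finset.mem_univ _, (daState_mono j m.le_succ).lt_of_ne' hj⟩
    have := ih fun n hn => h n (by omega)
    omega

/-- Deferred acceptance terminates within `|I| * |S|` rounds: every round that changes the
state moves some student down her list, and lists have at most `|S|` acceptable schools. -/
theorem daState_eq_of_le (hP : ∀ i, ValidPref (P i)) {n : ℕ}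
    (hn : Fintype.card I * Fintype.card S ≤ n) :
    daState P prio q n = daState P prio q (Fintype.card I * Fintype.card S) := by
  set N := Fintype.card I * Fintype.card S
  suffices ∃ m ≤ N, daState P prio q (m + 1) = daState P prio q m by
    obtain ⟨m, hm, hfix⟩ := this
    rw [daState_eq_of_fixed hfix (hm.trans hn), daState_eq_of_fixed hfix hm]
  by_contra! h
  have hge := le_sum_daState (m := N + 1) fun n hn => h n (by omega)
  have hle : ∑ j, daState P prio q (N + 1) j ≤ N :=
    calc ∑ j, daState P prio q (N + 1) j ≤ ∑ _j : I, Fintype.card S :=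
          Finset.sum_le_sum fun j _ =>
            (daState_le_length _ j).trans (acceptables_nodup (hP j)).length_le_card
      _ = N := by simp [N]
  omega

theorem daState_le_final (hP : ∀ i, ValidPref (P i)) (n : ℕ) (j : I) :
    daState P prio q n j ≤ daState P prio q (Fintype.card I * Fintype.card S) j := by
  rcases le_total n (Fintype.card I * Fintype.card S) with hn | hn
  · exact daState_mono j hn
  · rw [daState_eq_of_le hP hn]

theorem lt_of_daRejects (hP : ∀ i, ValidPref (P i)) {n : ℕ}
    (h : daRejects P prio q (daState P prio q n) t j) :
    n < Fintype.card I * Fintype.card S := by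
  by_contra! hn
  have := daStep_apply_of_daRejects h
  rw [← daState_succ, daState_eq_of_le hP hn, daState_eq_of_le hP (by omega)] at this
  omega

theorem GS_eq (hP : ∀ i, ValidPref (P i)) :
    GS P prio q = daTarget P (daState P prio q (Fintype.card I * Fintype.card S)) := by
  funext j
  change (match daTarget P (daState P prio q (Fintype.card I * Fintype.card S + 1)) j with
    | none => none
    | some s => if j ∈ daHeld P prio q (daState P prio q _) s then some s else none) = _
  rw [daState_eq_of_le hP (Nat.le_succ _)]
  split
  · next h => exact h.symm
  · next t ht =>
    rw [if_pos (not_not.mp fun h => (lt_of_daRejects hP ⟨ht, h⟩).false), ht]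

theorem GS_eq_some_iff (hP : ∀ i, ValidPref (P i)) :
    GS P prio q j = some t ↔
      j ∈ daHeld P prio q (daState P prio q (Fintype.card I * Fintype.card S)) t := by
  rw [GS_eq hP]
  exact ⟨fun h => not_not.mp fun h' => (lt_of_daRejects hP ⟨h, h'⟩).false,
    fun h => (mem_daHeld h).1⟩

theorem GS_mem_acceptables (hP : ∀ i, ValidPref (P i)) (h : GS P prio q j = some t) :
    t ∈ acceptables (P j) := by
  rw [GS_eq hP] at h
  exact ((daTarget_eq_some_iff (hP j)).mp h).1

theorem prefLt_GS_iff_exists_daRejects (hP : ∀ i, ValidPref (P i)) :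
    prefLt (P j) (some t) (GS P prio q j) ↔
      ∃ n, daRejects P prio q (daState P prio q n) t j := by
  rw [GS_eq hP, daTarget, prefLt_some_getElem?_iff (hP j)]
  constructor
  · rintro ⟨ht, hlt⟩
    obtain ⟨n, -, hn, hn'⟩ := exists_daState_eq_of_lt hlt
    refine ⟨n, ?_⟩
    rw [daState_succ] at hn'
    obtain ⟨t', ht'⟩ := exists_daRejects_of_daStep_apply_ne
      (by omega : daStep P prio q (daState P prio q n) j ≠ daState P prio q n j)
    have := ((daTarget_eq_some_iff (hP j)).mpr ⟨ht, hn⟩).symm.trans ht'.1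
    exact Option.some_injective _ this ▸ ht'
  · rintro ⟨n, hrej⟩
    obtain ⟨ht, hn⟩ := (daTarget_eq_some_iff (hP j)).mp hrej.1
    have hsucc := daStep_apply_of_daRejects hrej
    rw [← daState_succ] at hsucc
    have : daState P prio q (n + 1) j ≤ daState P prio q (Fintype.card I * Fintype.card S) j :=
      daState_le_final hP _ _
    exact ⟨ht, by omega⟩

end DeferredAcceptance

section FullClasses

variable {P : I → List (Option S)} {prio : S → List I} {q : S → ℕ} {σ : I → ℕ} {t : S}
  {j : I}

theorem fullAbove_of_daRejects (hprio : ValidPrio (prio t)) (h : daRejects P prio q σ t j) :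
    FullAbove P prio q σ t j := by
  set L := (prio t).filter fun i => decide (daTarget P σ i = some t)
  have hheld : daHeld P prio q σ t = L.take (q t) := rfl
  have hjL : j ∈ L := List.mem_filter.mpr ⟨hprio.2 j, by simpa using h.1⟩
  have hlen : q t < L.length := by
    by_contra! hc
    exact h.2 (by rw [hheld, List.take_of_length_le hc]; exact hjL)
  refine ⟨by rw [hheld, List.length_take]; omega, fun x hx => ?_⟩
  exact ((prioLt_pairwise hprio.1).filter _).rel_of_mem_take_of_notMem hx hjL h.2

/-- The students a school holds keep applying to it, and it only trades them for better
ones. -/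
theorem FullAbove.step (hprio : (prio t).Nodup) (h : FullAbove P prio q σ t j) :
    FullAbove P prio q (daStep P prio q σ) t j := by
  obtain ⟨hlen, habove⟩ := h
  set L := (prio t).filter fun i => decide (daTarget P (daStep P prio q σ) i = some t)
  have hheld : daHeld P prio q (daStep P prio q σ) t = L.take (q t) := rfl
  have hL : L.Pairwise (prioLt (prio t)) := (prioLt_pairwise hprio).filter _
  have hheldL : ∀ x ∈ daHeld P prio q σ t, x ∈ L := fun x hx =>
    List.mem_filter.mpr ⟨(mem_daHeld hx).2, by simpa using daTarget_daStep_of_mem_daHeld hx⟩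
  have hqL : q t ≤ L.length :=
    hlen ▸ ((daHeld_nodup hprio).subperm hheldL).length_le
  rw [FullAbove, hheld]
  refine ⟨by rw [List.length_take]; omega, fun x hx => ?_⟩
  by_contra hxj
  have hsub : ∀ y ∈ daHeld P prio q σ t, y ∈ L.take (q t) := fun y hy =>
    hL.mem_take_of_rel (fun _ _ hab hba => lt_asymm hab hba) hx (hheldL y hy)
      (by have := habove y hy; unfold prioLt at *; omega)
  obtain ⟨y, hy, hyx⟩ := (daHeld_nodup hprio).exists_mem_notMem
    (by rw [hlen]; exact List.length_take_le _ _) hx fun hxH => hxj (habove x hxH)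
  exact hyx (hsub y hy)

theorem FullAbove.daState_mono (hprio : (prio t).Nodup) {m n : ℕ}
    (h : FullAbove P prio q (daState P prio q m) t j) (hmn : m ≤ n) :
    FullAbove P prio q (daState P prio q n) t j := by
  induction n, hmn using Nat.le_induction with
  | base => exact h
  | succ n _ ih => rw [daState_succ]; exact ih.step hprio

theorem exists_daRejects_of_mem_daHeld_daStep (hprio : (prio t).Nodup)
    (hfull : (daHeld P prio q σ t).length = q t) (hj : j ∉ daHeld P prio q σ t)
    (hj' : j ∈ daHeld P prio q (daStep P prio q σ) t) :
    ∃ x ∈ daHeld P prio q σ t, daRejects P prio q (daStep P prio q σ) t x := by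
  obtain ⟨x, hx, hx'⟩ := (daHeld_nodup hprio).exists_mem_notMem
    (hfull ▸ length_daHeld_le) hj' hj
  exact ⟨x, hx, daTarget_daStep_of_mem_daHeld hx, hx'⟩

theorem exists_round_admitted (hP : ∀ i, ValidPref (P i)) (hj : GS P prio q j = some t)
    {m : ℕ} {t' : S} (hrej : daRejects P prio q (daState P prio q m) t' j) :
    ∃ n, m ≤ n ∧ j ∉ daHeld P prio q (daState P prio q n) t ∧
      j ∈ daHeld P prio q (daState P prio q (n + 1)) t := by
  rw [GS_eq hP, daTarget_eq_some_iff (hP j)] at hj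
  set v := (acceptables (P j)).idxOf t
  have hle : ∀ n, daState P prio q n j ≤ v := fun n => (daState_le_final hP n j).trans_eq hj.2
  have hm := daStep_apply_of_daRejects hrej
  rw [← daState_succ] at hm
  have hm' := hle (m + 1)
  obtain ⟨n, -, hn, hn'⟩ := exists_daState_eq_of_lt (P := P) (prio := prio) (q := q) (j := j)
    (show v - 1 < daState P prio q (Fintype.card I * Fintype.card S) j by omega)
  have hmn : m ≤ n := by
    by_contra! h
    have : daState P prio q (n + 1) j ≤ daState P prio q m j := daState_mono j (by omega)
    omega
  have htarget : daTarget P (daState P prio q (n + 1)) j = some t :=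
    (daTarget_eq_some_iff (hP j)).mpr ⟨hj.1, by omega⟩
  refine ⟨n, hmn, fun hheld => ?_, not_not.mp fun hheld => ?_⟩
  · have := ((daTarget_eq_some_iff (hP j)).mp (mem_daHeld hheld).1).2
    omega
  · have := daStep_apply_of_daRejects ⟨htarget, hheld⟩
    rw [← daState_succ] at this
    have := hle (n + 1 + 1)
    omega

end FullClasses

section GaleShapley

variable {P : I → List (Option S)} {prio : S → List I} {q : S → ℕ} {t : S} {j : I}

theorem card_GS_eq_length_daHeld (hP : ∀ i, ValidPref (P i)) (hprio : ∀ s, (prio s).Nodup)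
    (t : S) :
    (Finset.univ.filter fun i => GS P prio q i = some t).card =
      (daHeld P prio q (daState P prio q (Fintype.card I * Fintype.card S)) t).length := by
  rw [← List.toFinset_card_of_nodup (daHeld_nodup (hprio t))]
  congr 1
  ext i
  simp [GS_eq_some_iff hP]

theorem GS_isMatching (hP : ∀ i, ValidPref (P i)) (hprio : ∀ s, (prio s).Nodup) :
    IsMatching q (GS P prio q) := fun t =>
  (card_GS_eq_length_daHeld hP hprio t).trans_le length_daHeld_le

theorem fullAbove_of_prefLt_GS (hP : ∀ i, ValidPref (P i)) (hprio : ∀ s, ValidPrio (prio s))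
    (h : prefLt (P j) (some t) (GS P prio q j)) :
    FullAbove P prio q (daState P prio q (Fintype.card I * Fintype.card S)) t j := by
  obtain ⟨n, hn⟩ := (prefLt_GS_iff_exists_daRejects hP).mp h
  exact (fullAbove_of_daRejects (hprio t) hn).daState_mono (hprio t).1 (lt_of_daRejects hP hn).le

theorem card_GS_eq_of_prefLt_GS (hP : ∀ i, ValidPref (P i)) (hprio : ∀ s, ValidPrio (prio s))
    (h : prefLt (P j) (some t) (GS P prio q j)) :
    (Finset.univ.filter fun i => GS P prio q i = some t).card = q t :=
  (card_GS_eq_length_daHeld hP (fun s => (hprio s).1) t).trans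
    (fullAbove_of_prefLt_GS hP hprio h).1

theorem prioLt_of_prefLt_GS (hP : ∀ i, ValidPref (P i)) (hprio : ∀ s, ValidPrio (prio s))
    (h : prefLt (P j) (some t) (GS P prio q j)) {i : I} (hi : GS P prio q i = some t) :
    prioLt (prio t) i j :=
  (fullAbove_of_prefLt_GS hP hprio h).2 i ((GS_eq_some_iff hP).mp hi)

theorem GS_isStable (hP : ∀ i, ValidPref (P i)) (hprio : ∀ s, ValidPrio (prio s)) :
    IsStable P prio q (GS P prio q) := by
  refine ⟨fun i h => ?_, fun i ⟨t, hpref, hcap⟩ => ?_⟩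
  · cases hi : GS P prio q i with
    | none => rw [hi] at h; exact prefLt_irrefl _ _ h
    | some u => rw [hi] at h; exact not_prefLt_none_some (hP i) (GS_mem_acceptables hP hi) h
  · rcases hcap with hlt | ⟨i', hi', hii'⟩
    · exact hlt.ne (card_GS_eq_of_prefLt_GS hP hprio hpref)
    · exact lt_asymm hii' (prioLt_of_prefLt_GS hP hprio hpref hi')

end GaleShapley

section BlockingLemma

variable {P : I → List (Option S)} {prio : S → List I} {q : S → ℕ} {ν : I → Option S}

theorem exists_eq_some_of_prefLt_GS (hP : ∀ i, ValidPref (P i))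
    (hprio : ∀ s, ValidPrio (prio s)) {j : I} {a : Option S}
    (h : prefLt (P j) a (GS P prio q j)) : ∃ t, a = some t := by
  cases a with
  | none => exact absurd h ((GS_isStable hP hprio).1 j)
  | some t => exact ⟨t, rfl⟩

/-- Consider the last round at which a student preferring `ν` is rejected by a school that
`ν` gives to such a student. The school `t` where she ends up admits her later, when `t` is
already full, so it rejects some `x` at that moment; `x` does not prefer `ν`, and `(x, t)`
blocks `ν`. -/
theorem exists_blocks_of_forall_GS_eq (hP : ∀ i, ValidPref (P i))
    (hprio : ∀ s, ValidPrio (prio s)) (hB : ∃ j, prefLt (P j) (ν j) (GS P prio q j))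
    (hGS : ∀ j, prefLt (P j) (ν j) (GS P prio q j) →
      ∃ j', prefLt (P j') (ν j') (GS P prio q j') ∧ GS P prio q j = ν j') :
    ∃ x t, ¬ prefLt (P x) (ν x) (GS P prio q x) ∧ Blocks P prio q ν x t := by
  classical
  set μ := GS P prio q
  let Rej (m : ℕ) : Prop := ∃ j j', prefLt (P j) (ν j) (μ j) ∧
    prefLt (P j') (ν j') (μ j') ∧
    ∃ t, ν j' = some t ∧ daRejects P prio q (daState P prio q m) t j
  have hRej_lt : ∀ m, Rej m → m < Fintype.card I * Fintype.card S :=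
    fun m ⟨_, _, _, _, _, _, h⟩ => lt_of_daRejects hP h
  obtain ⟨m₀, hm₀⟩ : ∃ m, Rej m := by
    obtain ⟨j, hj⟩ := hB
    obtain ⟨t, hjt⟩ := exists_eq_some_of_prefLt_GS hP hprio hj
    obtain ⟨m, hm⟩ := (prefLt_GS_iff_exists_daRejects hP).mp (hjt ▸ hj)
    exact ⟨m, j, j, hj, hj, t, hjt, hm⟩
  set mLast := Nat.findGreatest Rej (Fintype.card I * Fintype.card S)
  have hlast : ∀ m, mLast < m → ¬ Rej m := fun m hm hrej =>
    Nat.findGreatest_is_greatest hm (hRej_lt m hrej).le hrej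
  obtain ⟨j, -, hj, -, _, -, hrej⟩ := Nat.findGreatest_spec (hRej_lt m₀ hm₀).le hm₀
  obtain ⟨j', hj', hμj⟩ := hGS j hj
  obtain ⟨t, hνj'⟩ := exists_eq_some_of_prefLt_GS hP hprio hj'
  rw [hνj'] at hμj hj'
  obtain ⟨n, hn, hout, hin⟩ := exists_round_admitted hP hμj hrej
  obtain ⟨m', hm'⟩ := (prefLt_GS_iff_exists_daRejects hP).mp hj'
  have hm'n : m' ≤ n := by
    by_contra! h
    exact hlast m' (by omega) ⟨j', j', hνj' ▸ hj', hνj' ▸ hj', t, hνj', hm'⟩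
  have hfull := (fullAbove_of_daRejects (hprio t) hm').daState_mono (hprio t).1 hm'n
  rw [daState_succ] at hin
  obtain ⟨x, hxheld, hxrej⟩ :=
    exists_daRejects_of_mem_daHeld_daStep (hprio t).1 hfull.1 hout hin
  rw [← daState_succ] at hxrej
  have hxt : prefLt (P x) (some t) (μ x) := (prefLt_GS_iff_exists_daRejects hP).mpr ⟨_, hxrej⟩
  have hx : ¬ prefLt (P x) (ν x) (μ x) := fun hx' =>
    hlast (n + 1) (by omega) ⟨x, j', hx', hνj' ▸ hj', t, hνj', hxrej⟩
  exact ⟨x, t, hx, prefLt_of_prefLt_of_not_prefLt hxt hx,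
    Or.inr ⟨j', hνj', hfull.2 x hxheld⟩⟩

end BlockingLemma

section Consequences

variable {P : I → List (Option S)} {prio : S → List I} {q : S → ℕ} {ν : I → Option S}

/-- The blocking lemma of Gale and Sotomayor. -/
theorem exists_blocks_of_prefLt_GS (hP : ∀ i, ValidPref (P i))
    (hprio : ∀ s, ValidPrio (prio s)) (hν : IsMatching q ν)
    (hB : ∃ j, prefLt (P j) (ν j) (GS P prio q j)) :
    ∃ x t, ¬ prefLt (P x) (ν x) (GS P prio q x) ∧ Blocks P prio q ν x t := by
  classical
  set μ := GS P prio q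
  -- A student who does not prefer `ν` and leaves a school that `ν` gives to one who does
  -- blocks `ν` with it; otherwise double counting applies.
  by_cases hleave : ∃ j h, prefLt (P j) (ν j) (μ j) ∧ ¬ prefLt (P h) (ν h) (μ h) ∧
      μ h = ν j ∧ ν h ≠ ν j
  · obtain ⟨j, h, hj, hh, hμh, hνh⟩ := hleave
    obtain ⟨t, hνj⟩ := exists_eq_some_of_prefLt_GS hP hprio hj
    rw [hνj] at hj hμh hνh
    rw [hμh] at hh
    exact ⟨h, t, hμh ▸ hh, (prefLt_or_prefLt_of_ne (hP h) hνh).resolve_left hh,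
      Or.inr ⟨j, hνj, prioLt_of_prefLt_GS hP hprio hj hμh⟩⟩
  · push Not at hleave
    set B := Finset.univ.filter fun j => prefLt (P j) (ν j) (μ j)
    have hmemB : ∀ j, j ∈ B ↔ prefLt (P j) (ν j) (μ j) := by simp [B]
    have hne : ∀ j ∈ B, μ j ≠ ν j := fun j hj heq => by
      rw [hmemB, heq] at hj
      exact prefLt_irrefl _ _ hj
    have hcard : ∀ j ∈ B, (Finset.univ.filter fun h => ν h = ν j).card ≤
        (Finset.univ.filter fun h => μ h = ν j).card := by
      intro j hj
      rw [hmemB] at hj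
      obtain ⟨t, hνj⟩ := exists_eq_some_of_prefLt_GS hP hprio hj
      rw [hνj] at hj ⊢
      rw [card_GS_eq_of_prefLt_GS hP hprio hj]
      exact hν t
    have hclosed : ∀ j ∈ B, ∀ h, μ h = ν j → ν h ≠ ν j → h ∈ B :=
      fun j hj h hμh hνh =>
        (hmemB h).mpr (not_not.mp fun hh => hνh (hleave j h ((hmemB j).mp hj) hh hμh))
    refine exists_blocks_of_forall_GS_eq hP hprio hB fun j hj => ?_
    obtain ⟨j', hj', hμj⟩ :=
      Finset.exists_eq_of_card_fiber_le hne hcard hclosed j ((hmemB j).mpr hj)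
    exact ⟨j', (hmemB j').mp hj', hμj⟩

theorem not_prefLt_GS_of_isStable (hP : ∀ i, ValidPref (P i))
    (hprio : ∀ s, ValidPrio (prio s)) (hν : IsMatching q ν) (hst : IsStable P prio q ν)
    (j : I) : ¬ prefLt (P j) (ν j) (GS P prio q j) := fun h =>
  let ⟨x, t, _, hx⟩ := exists_blocks_of_prefLt_GS hP hprio hν ⟨j, h⟩
  hst.2 x ⟨t, hx⟩

theorem GS_notManipulable (hP : ∀ i, ValidPref (P i)) (hprio : ∀ s, ValidPrio (prio s)) :
    NotManipulable (fun R => GS R prio q) P := by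
  rintro i ⟨Q, hQ, hpref⟩
  have hR := validPref_update hP i hQ
  obtain ⟨x, t, hx, hxt, hcap⟩ := exists_blocks_of_prefLt_GS hP hprio
    (GS_isMatching hR fun s => (hprio s).1) ⟨i, hpref⟩
  have hxi : x ≠ i := by rintro rfl; exact hx hpref
  exact (GS_isStable hR hprio).2 x ⟨t, by rwa [Function.update_of_ne hxi], hcap⟩

/-- The rural hospitals theorem, for the set of matched students. -/
theorem GS_eq_none_iff_of_isStable (hP : ∀ i, ValidPref (P i))
    (hprio : ∀ s, ValidPrio (prio s)) (hν : IsMatching q ν) (hst : IsStable P prio q ν)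
    (j : I) : GS P prio q j = none ↔ ν j = none := by
  set μ := GS P prio q
  have hsub : ∀ j, μ j = none → ν j = none := by
    intro j hj
    cases hνj : ν j with
    | none => rfl
    | some u =>
      have hu := (prefLt_or_prefLt_of_ne (hP j) (Option.some_ne_none u)).resolve_right
        (hνj ▸ hst.1 j)
      rw [← hνj, ← hj] at hu
      exact absurd hu (not_prefLt_GS_of_isStable hP hprio hν hst j)
  have hfiber : ∀ t, (Finset.univ.filter fun h => μ h = some t).card ≤
      (Finset.univ.filter fun h => ν h = some t).card := by
    intro t
    by_contra! hlt
    obtain ⟨h, hμh, hνh⟩ := Finset.exists_mem_notMem_of_card_lt_card hlt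
    simp only [Finset.mem_filter, Finset.mem_univ, true_and] at hμh hνh
    have hpref := (prefLt_or_prefLt_of_ne (hP h) (Ne.symm hνh)).resolve_right
      (hμh ▸ not_prefLt_GS_of_isStable hP hprio hν hst h)
    exact hst.2 h ⟨t, hpref, Or.inl (hlt.trans_le (GS_isMatching hP (fun s => (hprio s).1) t))⟩
  have hcard : (Finset.univ.filter fun h => ν h = none).card ≤
      (Finset.univ.filter fun h => μ h = none).card := by
    have h1 := Finset.card_filter_eq_none_add_sum μ
    have h2 := Finset.card_filter_eq_none_add_sum ν
    have := Finset.sum_le_sum fun t (_ : t ∈ Finset.univ) => hfiber t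
    omega
  have heq := Finset.eq_of_subset_of_card_le
    (fun h hh => by simpa using hsub h (by simpa using hh)) hcard
  simpa using Finset.ext_iff.mp heq j

end Consequences

noncomputable def onlyPref (s : S) : List (Option S) :=
  prefList [s] ((Finset.univ.erase s).toList.map some)

theorem validPref_onlyPref (s : S) : ValidPref (onlyPref s) :=
  validPref_prefList _ _ (List.nodup_singleton s)
    ((Finset.nodup_toList _).map (Option.some_injective S)) (by simp) (by simp)
    (fun t ht => by simpa using ht)

theorem acceptables_onlyPref (s : S) : acceptables (onlyPref s) = [s] :=
  acceptables_prefList _ _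

theorem not_prefLt_onlyPref_some (s : S) (a : Option S) : ¬ prefLt (onlyPref s) a (some s) := by
  rw [prefLt, onlyPref, idxOf_prefList_some _ _ (List.mem_singleton_self s)]
  simp

theorem isStable_of_eq_of_ne {R R' : I → List (Option S)} {prio : S → List I} {q : S → ℕ}
    {μ : I → Option S} {i : I} (hR : ∀ j ≠ i, R' j = R j) (hst : IsStable R prio q μ)
    (hIR : ¬ prefLt (R' i) none (μ i)) (hi : ∀ t, ¬ Blocks R' prio q μ i t) :
    IsStable R' prio q μ := by
  refine ⟨fun j => ?_, fun j ⟨t, hb⟩ => ?_⟩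
  · rcases eq_or_ne j i with rfl | hj
    · exact hIR
    · rw [hR j hj]; exact hst.1 j
  · rcases eq_or_ne j i with rfl | hj
    · exact hi t hb
    · exact hst.2 j ⟨t, hR j hj ▸ hb.1, hb.2⟩

/-- Were it not so, then once `i` lists `s` alone, `μ` and `ν` would both be stable, with `i`
unmatched at the first but matched at the second, against the rural hospitals theorem. -/
theorem card_lt_or_exists_prioLt_of_isStable {R : I → List (Option S)} {prio : S → List I}
    {q : S → ℕ} (hR : ∀ i, ValidPref (R i)) (hprio : ∀ s, ValidPrio (prio s))
    {μ ν : I → Option S} {i : I} {s : S} {Q : List (Option S)}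
    (hμ : IsMatching q μ) (hμst : IsStable R prio q μ) (hμi : μ i = none)
    (hν : IsMatching q ν) (hνst : IsStable (Function.update R i Q) prio q ν)
    (hνi : ν i = some s) :
    (Finset.univ.filter fun j => μ j = some s).card < q s ∨
      ∃ j, μ j = some s ∧ prioLt (prio s) i j := by
  by_contra hclaim
  set R₀ := Function.update R i (onlyPref s)
  have hR₀ := validPref_update hR i (validPref_onlyPref s)
  have hR₀i : R₀ i = onlyPref s := Function.update_self _ _ _
  have hR₀j : ∀ j ≠ i, R₀ j = R j := fun j hj => Function.update_of_ne hj _ _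
  have hμst₀ : IsStable R₀ prio q μ := by
    refine isStable_of_eq_of_ne hR₀j hμst (by rw [hμi]; exact prefLt_irrefl _ _)
      fun t ⟨hpref, hcap⟩ => hclaim ?_
    rw [hR₀i, hμi, prefLt_some_none_iff (validPref_onlyPref s), acceptables_onlyPref,
      List.mem_singleton] at hpref
    exact hpref ▸ hcap
  have hνst₀ : IsStable R₀ prio q ν := by
    refine isStable_of_eq_of_ne (R := Function.update R i Q) (i := i) (fun j hj => ?_) hνst ?_ ?_
    · rw [hR₀j j hj, Function.update_of_ne hj]
    · rw [hR₀i, hνi]; exact not_prefLt_onlyPref_some s none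
    · rintro t ⟨hpref, -⟩
      rw [hR₀i, hνi] at hpref
      exact not_prefLt_onlyPref_some s _ hpref
  have hGS := (GS_eq_none_iff_of_isStable hR₀ hprio hμ hμst₀ i).mpr hμi
  apply not_prefLt_GS_of_isStable hR₀ hprio hν hνst₀ i
  rw [hGS, hνi, Function.update_self, prefLt_some_none_iff (validPref_onlyPref s),
    acceptables_onlyPref]
  exact List.mem_singleton_self s

theorem nodup_fpfPrio (fpf : Finset S) (P : I → List (Option S)) {prio : S → List I}
    (hprio : ∀ s, (prio s).Nodup) (s : S) : (fpfPrio fpf P prio s).Nodup := by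
  unfold fpfPrio
  split_ifs
  · refine List.nodup_flatMap.mpr ⟨fun _ _ => (hprio s).filter _, List.nodup_range.imp ?_⟩
    intro r r' hrr' i hi hi'
    simp only [List.mem_filter, decide_eq_true_eq] at hi hi'
    exact hrr' (hi.2.symm.trans hi'.2)
  · exact hprio s

section Constrained

variable {P : I → List (Option S)} {prio : S → List I} {q : S → ℕ} (k : ℕ)

theorem GSk_update (i : I) (Q : List (Option S)) :
    GSk k (Function.update P i Q) prio q =
      GS (Function.update (fun j => truncate (P j) k) i (truncate Q k)) prio q := by
  rw [GSk, funext (Function.apply_update (fun _ p => truncate p k) P i Q)]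

theorem GS_truncate_mem_take (hP : ∀ i, ValidPref (P i)) {prio' : S → List I} {j : I} {u : S}
    (h : GS (fun j => truncate (P j) k) prio' q j = some u) : u ∈ (acceptables (P j)).take k := by
  rw [← acceptables_truncate]
  exact GS_mem_acceptables (P := fun j => truncate (P j) k) (fun j => validPref_truncate k (hP j)) h

variable (fpf : Finset S)

theorem isMatching_FPFk (hP : ∀ i, ValidPref (P i)) (hprio : ∀ s, (prio s).Nodup) :
    IsMatching q (FPFk fpf k P prio q) :=
  GS_isMatching (fun j => validPref_truncate k (hP j)) (nodup_fpfPrio fpf _ hprio)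

theorem isStable_truncate_FPFk (hP : ∀ i, ValidPref (P i))
    (hstab : IsStable P prio q (FPFk fpf k P prio q)) :
    IsStable (fun j => truncate (P j) k) prio q (FPFk fpf k P prio q) :=
  isStable_truncate hP k (fun _ _ => GS_truncate_mem_take k hP) hstab

end Constrained

theorem fpfk_stable_implies_gsk_not_manipulable_general
    {I S : Type*} [Fintype I] [DecidableEq I] [Fintype S] [DecidableEq S]
    (fpf : Finset S)
    (P : I → List (Option S)) (prio : S → List I) (q : S → ℕ)
    (hP : ∀ i, ValidPref (P i)) (hprio : ∀ s, ValidPrio (prio s))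
    (k : ℕ)
    (hstab : IsStable P prio q (FPFk fpf k P prio q)) :
    NotManipulable (fun R => GSk k R prio q) P := by
  rintro i ⟨Q, hQ, hpref⟩
  have hPk : ∀ j, ValidPref (truncate (P j) k) := fun j => validPref_truncate k (hP j)
  have hR := validPref_update hPk i (validPref_truncate k hQ)
  simp only [GSk_update] at hpref
  cases hμi : GSk k P prio q i with
  | some u =>
    rw [hμi] at hpref
    exact GS_notManipulable hPk hprio i ⟨truncate Q k, validPref_truncate k hQ,
      hμi ▸ prefLt_truncate_of_prefLt k (hP i) (GS_truncate_mem_take k hP hμi) hpref⟩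
  | none =>
    rw [hμi] at hpref
    obtain ⟨s, hνi⟩ := Option.ne_none_iff_exists'.mp fun h => prefLt_irrefl _ _ (h ▸ hpref)
    have hFPF := isMatching_FPFk (q := q) k fpf hP fun s => (hprio s).1
    have hFPFst := isStable_truncate_FPFk k fpf hP hstab
    have hFPFi := (GS_eq_none_iff_of_isStable hPk hprio hFPF hFPFst i).mp hμi
    exact hstab.2 i ⟨s, by rwa [hFPFi, ← hνi], card_lt_or_exists_prioLt_of_isStable hPk hprio
      hFPF hFPFst hFPFi (GS_isMatching hR fun s => (hprio s).1) (GS_isStable hR hprio) hνi⟩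

/-- Proposition 4: for `k > 1`, if the constrained
first-preference-first mechanism `FPF^k` is stable at `(P,≻,q)` then the constrained
Gale–Shapley mechanism `GS^k` is not manipulable at `(P,≻,q)`. -/
theorem fpfk_stable_implies_gsk_not_manipulable
    {I S : Type*} [Fintype I] [DecidableEq I] [Fintype S] [DecidableEq S]
    (hIS : Fintype.card S < Fintype.card I)
    (fpf : Finset S)
    (P : I → List (Option S)) (prio : S → List I) (q : S → ℕ)
    (hP : ∀ i, ValidPref (P i)) (hprio : ∀ s, ValidPrio (prio s))
    (k : ℕ) (hk : 1 < k)
    (hstab : IsStable P prio q (FPFk fpf k P prio q)) :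
    NotManipulable (fun R => GSk k R prio q) P :=
  fpfk_stable_implies_gsk_not_manipulable_general fpf P prio q hP hprio k hstab

end SchoolChoice
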